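/- For the difference function of a Bézier curve, C(1−s) − C(t) = ((1−s) − t) · n · S(s,t) for all s, t with (1−s) ≠ t, where S is the published symmetric form; consequently, if (s,t) is in the domain D = {(s,t) : s+t < 1, s,t ≥ 0, (s,t) ≠ (0,0)} and S(s,t) = 0, then C(1−s) = C(t) with 1−s ≠ t, i.e., the curve is self-intersecting. -/

import Mathlib

/-- The Bézier curve of degree `n` with control points `P : ℕ → ℝ³`
(only `P 0, …, P n` are used). -/
noncomputable def bezier (n : ℕ) (P : ℕ → EuclideanSpace ℝ (Fin 3)) (t : ℝ) :
    EuclideanSpace ℝ (Fin 3) :=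
  ∑ i ∈ Finset.range (n + 1), ((n.choose i : ℝ) * t ^ i * (1 - t) ^ (n - i)) • P i

/-- The published symmetric form `S(s,t)` (Andersson et al.), expressed in terms of the
edge vectors `q i = P (i+1) - P i`. -/
noncomputable def selfIntForm (n : ℕ) (P : ℕ → EuclideanSpace ℝ (Fin 3)) (s t : ℝ) :
    EuclideanSpace ℝ (Fin 3) :=
  (1 / (n : ℝ)) •
    ∑ i ∈ Finset.range n, ∑ j ∈ Finset.range (n - i),
      (((n - 1 - i).choose j : ℝ) * s ^ (n - 1 - i - j) * (1 - s) ^ j) •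
        ∑ k ∈ Finset.range (i + 1),
          ((i.choose k : ℝ) * (1 - t) ^ (i - k) * t ^ k) • (P (j + k + 1) - P (j + k))


/-! With `b(u^[a], t^[b])` the blossom of the curve at `a` copies of `u` and `b` copies of `t`,
`C(u) - C(t)` telescopes as `∑_{i<n} (b(u^[n-i], t^[i]) - b(u^[n-1-i], t^[i+1]))`. One
de Casteljau step in each slot shows that the `i`-th term is `(u - t)` times the blossom of the
hodograph control points `P (j+1) - P j` at `u^[n-1-i], t^[i]`, and `n • S(s,t)` is exactly the
sum of these hodograph blossoms at `u = 1 - s`. On `D` we have `1 - s > t`, so `S(s,t) = 0`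
forces `C(1 - s) = C(t)` at distinct parameters. -/

open Finset

section BezierCombination

variable {R M : Type*} [CommRing R] [AddCommGroup M] [Module R M]

def bezierComb (n : ℕ) (Q : ℕ → M) (t : R) : M :=
  ∑ i ∈ range (n + 1), ((n.choose i : R) * t ^ i * (1 - t) ^ (n - i)) • Q i

@[simp]
lemma bezierComb_zero (Q : ℕ → M) (t : R) : bezierComb 0 Q t = Q 0 := by
  simp [bezierComb]

lemma bezierComb_add (n : ℕ) (Q Q' : ℕ → M) (t : R) :
    bezierComb n (fun j => Q j + Q' j) t = bezierComb n Q t + bezierComb n Q' t := by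
  simp only [bezierComb, smul_add, sum_add_distrib]

lemma bezierComb_sub (n : ℕ) (Q Q' : ℕ → M) (t : R) :
    bezierComb n (fun j => Q j - Q' j) t = bezierComb n Q t - bezierComb n Q' t := by
  simp only [bezierComb, smul_sub, sum_sub_distrib]

lemma bezierComb_smul (n : ℕ) (a : R) (Q : ℕ → M) (t : R) :
    bezierComb n (fun j => a • Q j) t = a • bezierComb n Q t := by
  simp only [bezierComb, smul_sum, smul_comm a]

lemma bezierComb_succ (n : ℕ) (Q : ℕ → M) (t : R) :
    bezierComb (n + 1) Q t = bezierComb n (fun j => (1 - t) • Q j + t • Q (j + 1)) t := by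
  have pascal := sum_choose_succ_nsmul (fun i k => (t ^ i * (1 - t) ^ k) • Q i) n
  simp only [← Nat.cast_smul_eq_nsmul R, smul_smul, ← mul_assoc] at pascal
  rw [bezierComb, pascal, bezierComb, ← sum_add_distrib]
  refine sum_congr rfl fun i hi => ?_
  obtain ⟨k, rfl⟩ := Nat.exists_eq_add_of_le (mem_range_succ_iff.mp hi)
  rw [smul_add, smul_smul, smul_smul, Nat.add_sub_cancel_left, add_assoc,
    Nat.add_sub_cancel_left]
  congr 1 <;> congr 1 <;> ring

/-- The blossom (polar form) of the degree `a + b` Bézier curve with control points `Q`,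
evaluated at `a` copies of `u` and `b` copies of `t`. -/
def bezierBlossom (a b : ℕ) (Q : ℕ → M) (u t : R) : M :=
  bezierComb a (fun j => bezierComb b (fun k => Q (j + k)) t) u

@[simp]
lemma bezierBlossom_zero_right (a : ℕ) (Q : ℕ → M) (u t : R) :
    bezierBlossom a 0 Q u t = bezierComb a Q u := by
  simp [bezierBlossom]

@[simp]
lemma bezierBlossom_zero_left (b : ℕ) (Q : ℕ → M) (u t : R) :
    bezierBlossom 0 b Q u t = bezierComb b Q t := by
  simp [bezierBlossom]

lemma bezierBlossom_succ_sub_succ (a b : ℕ) (Q : ℕ → M) (u t : R) :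
    bezierBlossom (a + 1) b Q u t - bezierBlossom a (b + 1) Q u t =
      (u - t) • bezierBlossom a b (fun j => Q (j + 1) - Q j) u t := by
  rw [bezierBlossom, bezierBlossom, bezierBlossom, bezierComb_succ, ← bezierComb_sub,
    ← bezierComb_smul]
  congr 1
  funext j
  rw [bezierComb_succ, bezierComb_add, bezierComb_smul, bezierComb_smul, bezierComb_sub]
  simp only [add_assoc, Nat.add_comm 1]
  module

lemma bezierComb_sub_bezierComb (n : ℕ) (Q : ℕ → M) (u t : R) :
    bezierComb n Q u - bezierComb n Q t =
      (u - t) • ∑ i ∈ range n, bezierBlossom (n - 1 - i) i (fun j => Q (j + 1) - Q j) u t := by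
  have telescope := sum_range_sub' (fun i => bezierBlossom (n - i) i Q u t) n
  simp only [Nat.sub_zero, Nat.sub_self, bezierBlossom_zero_right,
    bezierBlossom_zero_left] at telescope
  rw [← telescope, smul_sum]
  refine sum_congr rfl fun i hi => ?_
  have hi : n - 1 - i + 1 = n - i := by have := mem_range.mp hi; omega
  rw [← bezierBlossom_succ_sub_succ, hi, Nat.sub_add_eq, Nat.sub_right_comm]

end BezierCombination

lemma bezier_eq_bezierComb (n : ℕ) (P : ℕ → EuclideanSpace ℝ (Fin 3)) :
    bezier n P = bezierComb n P :=
  rfl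

lemma selfIntForm_eq_smul_sum_bezierBlossom (n : ℕ) (P : ℕ → EuclideanSpace ℝ (Fin 3))
    (s t : ℝ) :
    selfIntForm n P s t = (1 / n : ℝ) •
      ∑ i ∈ range n, bezierBlossom (n - 1 - i) i (fun j => P (j + 1) - P j) (1 - s) t := by
  rw [selfIntForm]
  congr 1
  refine sum_congr rfl fun i hi => ?_
  rw [bezierBlossom, bezierComb, show n - i = n - 1 - i + 1 by have := mem_range.mp hi; omega]
  refine sum_congr rfl fun j _ => ?_
  rw [bezierComb, sub_sub_cancel, mul_right_comm]
  exact congrArg _ (sum_congr rfl fun k _ => by rw [mul_right_comm])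

theorem bezier_selfIntersection_criterion (n : ℕ) (hn : 1 ≤ n)
    (P : ℕ → EuclideanSpace ℝ (Fin 3)) :
    (∀ s t : ℝ, (1 - s) ≠ t →
      bezier n P (1 - s) - bezier n P t = (((1 - s) - t) * n) • selfIntForm n P s t) ∧
    (∀ s t : ℝ, 0 ≤ s → 0 ≤ t → s + t < 1 → (s, t) ≠ (0, 0) →
      selfIntForm n P s t = 0 →
      bezier n P (1 - s) = bezier n P t ∧ (1 - s) ≠ t) := by
  have identity (s t : ℝ) :
      bezier n P (1 - s) - bezier n P t = (((1 - s) - t) * n) • selfIntForm n P s t := by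
    have hn' : (n : ℝ) ≠ 0 := Nat.cast_ne_zero.mpr (by omega)
    rw [selfIntForm_eq_smul_sum_bezierBlossom, smul_smul, mul_assoc, mul_one_div_cancel hn',
      mul_one, bezier_eq_bezierComb]
    exact bezierComb_sub_bezierComb n P (1 - s) t
  refine ⟨fun s t _ => identity s t, fun s t _ _ hst _ hS => ?_⟩
  have hne : 1 - s ≠ t := fun h => by linarith
  exact ⟨sub_eq_zero.mp (by rw [identity, hS, smul_zero]), hne⟩
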